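/- For s > 0, g > 0, δ > 2, and 0 < b < c, the integral 2∫_b^c (1 − exp(−s g v^{−δ})) v dv equals Λ(s,b,c) − Θ(s,b,c), where Λ(s,b,c) = c²(1 − e^{−sgc^{−δ}}) − b²(1 − e^{−sgb^{−δ}}) and Θ(s,b,c) = (sg)^{2/δ}·(Γ(1−2/δ, sgb^{−δ}) − Γ(1−2/δ, sgc^{−δ})). -/

import Mathlib

open Real MeasureTheory

/-- The upper incomplete Gamma function Γ(s,x) = ∫_x^∞ t^{s−1} e^{−t} dt. -/
noncomputable def uGamma (s x : ℝ) : ℝ := ∫ t in Set.Ioi x, t ^ (s - 1) * Real.exp (-t)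

/-!
With `A = s g`, the function `F(v) = v² (1 - e^{-A v^{-δ}}) + A^{2/δ} Γ(1 - 2/δ, A v^{-δ})`
is a primitive of `2 (1 - e^{-A v^{-δ}}) v` on `v > 0`: since `∂ₓ Γ(a, x) = -x^{a-1} e^{-x}` and
`A^{2/δ} (A v^{-δ})^{-2/δ} = v²`, the derivative of the Gamma term cancels the term that the
product rule produces from differentiating `e^{-A v^{-δ}}`. The identity is the fundamental
theorem of calculus for `F` on `[b, c]`.
-/

open Set Filter Topology

lemma integrableOn_rpow_mul_exp_neg_Ioi (a : ℝ) {c : ℝ} (hc : 0 < c) :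
    IntegrableOn (fun t => t ^ a * exp (-t)) (Ioi c) := by
  refine integrable_of_isBigO_exp_neg one_half_pos (fun t ht => ?_)
    ((Gamma_integrand_isLittleO a).isBigO.congr_left fun t => mul_comm _ _)
  exact ((continuousAt_rpow_const t a (.inl (hc.trans_le ht).ne')).mul
    (continuous_exp.comp continuous_neg).continuousAt).continuousWithinAt

lemma hasDerivAt_uGamma (a : ℝ) {x : ℝ} (hx : 0 < x) :
    HasDerivAt (uGamma a) (-(x ^ (a - 1) * exp (-x))) x := by
  set f : ℝ → ℝ := fun t => t ^ (a - 1) * exp (-t)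
  have hf : ContinuousOn f (Ioi 0) := fun t ht =>
    ((continuousAt_rpow_const t _ (.inl (ne_of_gt ht))).mul
      (continuous_exp.comp continuous_neg).continuousAt).continuousWithinAt
  have hint : IntegrableOn f (Ioi (x / 2)) := integrableOn_rpow_mul_exp_neg_Ioi _ (by positivity)
  have hsplit : uGamma a =ᶠ[𝓝 x] fun y => uGamma a (x / 2) - ∫ t in x / 2..y, f t := by
    filter_upwards [Ioi_mem_nhds (half_lt_self hx)] with y hy
    rw [← intervalIntegral.integral_Ioi_sub_Ioi hint hy.le]
    exact (sub_sub_cancel _ _).symm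
  have hprim : HasDerivAt (fun y => ∫ t in x / 2..y, f t) (f x) x :=
    intervalIntegral.integral_hasDerivAt_right
      ((intervalIntegrable_iff_integrableOn_Ioc_of_le (half_le_self hx.le)).2
        (hint.mono_set Ioc_subset_Ioi_self))
      (hf.stronglyMeasurableAtFilter isOpen_Ioi x hx) (hf.continuousAt (Ioi_mem_nhds hx))
  exact (hprim.const_sub _).congr_of_eventuallyEq hsplit

noncomputable def annulusPrimitive (A δ v : ℝ) : ℝ :=
  v ^ 2 * (1 - exp (-A * v ^ (-δ))) + A ^ (2 / δ) * uGamma (1 - 2 / δ) (A * v ^ (-δ))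

lemma hasDerivAt_annulusPrimitive {A δ v : ℝ} (hA : 0 < A) (hδ : δ ≠ 0) (hv : 0 < v) :
    HasDerivAt (annulusPrimitive A δ) (2 * ((1 - exp (-A * v ^ (-δ))) * v)) v := by
  have hpow : HasDerivAt (fun v : ℝ => v ^ (-δ)) (-δ * v ^ (-δ - 1)) v := by
    simpa using hasDerivAt_rpow_const (p := -δ) (.inl hv.ne')
  have hu : 0 < A * v ^ (-δ) := by positivity
  have hquad := (hasDerivAt_pow 2 v).mul (((hpow.const_mul (-A)).exp).const_sub 1)
  have hgamma := ((hasDerivAt_uGamma (1 - 2 / δ) hu).comp v (hpow.const_mul A)).const_mul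
    (A ^ (2 / δ))
  refine (hquad.add hgamma).congr_deriv ?_
  have hscale : A ^ (2 / δ) * (A * v ^ (-δ)) ^ (1 - 2 / δ - 1) = v ^ 2 := by
    rw [sub_sub_cancel_left, mul_rpow hA.le (by positivity), ← mul_assoc, ← rpow_add hA,
      add_neg_cancel, rpow_zero, one_mul, ← rpow_mul hv.le, neg_mul_neg, mul_div_cancel₀ _ hδ]
    norm_cast
  simp only [neg_mul]
  linear_combination exp (-(A * v ^ (-δ))) * A * δ * v ^ (-δ - 1) * hscale

lemma two_mul_integral_eq_annulusPrimitive_sub {A δ b c : ℝ} (hA : 0 < A) (hδ : δ ≠ 0)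
    (hb : 0 < b) (hc : 0 < c) :
    2 * ∫ v in b..c, (1 - exp (-A * v ^ (-δ))) * v
      = annulusPrimitive A δ c - annulusPrimitive A δ b := by
  have hpos : ∀ v ∈ uIcc b c, 0 < v := fun v hv => (lt_inf_iff.2 ⟨hb, hc⟩).trans_le hv.1
  rw [← intervalIntegral.integral_const_mul]
  refine intervalIntegral.integral_eq_sub_of_hasDerivAt
    (fun v hv => hasDerivAt_annulusPrimitive hA hδ (hpos v hv))
    (ContinuousOn.intervalIntegrable fun v hv => ?_)
  have hpow := continuousAt_rpow_const v (-δ) (.inl (hpos v hv).ne')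
  exact (continuousAt_const.mul (((hpow.const_mul _).rexp.const_sub 1).mul
    continuousAt_id)).continuousWithinAt

/-- Closed-form evaluation of the annular interference integral:
2∫_b^c (1 − e^{−sgv^{−δ}}) v dv = Λ(s,b,c) − Θ(s,b,c). -/
theorem stmt_6 (s g δ b c : ℝ) (hs : 0 < s) (hg : 0 < g) (hδ : 2 < δ)
    (hb : 0 < b) (hbc : b < c) :
    2 * ∫ v in b..c, (1 - Real.exp (-(s * g) * v ^ (-δ))) * v
      = (c ^ 2 * (1 - Real.exp (-(s * g) * c ^ (-δ)))
          - b ^ 2 * (1 - Real.exp (-(s * g) * b ^ (-δ))))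
        - (s * g) ^ (2 / δ) *
            (uGamma (1 - 2 / δ) (s * g * b ^ (-δ)) - uGamma (1 - 2 / δ) (s * g * c ^ (-δ))) := by
  have hδ0 : δ ≠ 0 := (two_pos.trans hδ).ne'
  rw [two_mul_integral_eq_annulusPrimitive_sub (mul_pos hs hg) hδ0 hb (hb.trans hbc),
    annulusPrimitive, annulusPrimitive]
  ring
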